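/- (Multiply robust unbiased transformation.) Fix t ∈ {0, 1,…,τ−1} and suppose that for every k ∈ {t+1,…,τ}, either m′_k = m_k (the true sequential regression function) or g′_k = g_k (the true treatment probability). Then for every s̄_t ∈ 𝒮_t and every (a_t, h_t) ∈ 𝒜_t × ℋ_t: E[φ_{t+1}(s̄_t, Z; η′) ∣ A_t = a_t, H_t = h_t] = m_t(s̄_t, a_t, h_t), where for t = 0 the conditioning is omitted and m_0 = θ = E[q_1(A_1, H_1)]. -/

import Mathlib

open MeasureTheory Finset

namespace GLMTP

variable {τ : ℕ}

/-- Augmented natural-treatment history: one treatment value for each time index `< tp`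
(0-based; the paper's `s̄_t` corresponds to `tp = t`). -/
abbrev SbarN (𝓐 : Fin τ → Type) (tp : ℕ) : Type :=
  ∀ s : {s : Fin τ // s.val < tp}, 𝓐 s.1

/-- Observed history `H_t = (L_1, A_1, …, A_{t-1}, L_t)`: covariates up to (and including)
time `t` and treatments strictly before time `t`. -/
abbrev Hist (𝓐 𝓛 : Fin τ → Type) (t : Fin τ) : Type :=
  (∀ s : {s : Fin τ // s ≤ t}, 𝓛 s.1) × (∀ s : {s : Fin τ // s < t}, 𝓐 s.1)

/-- A generalized longitudinal modified treatment policy: at each time `t` it maps the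
history of natural treatment values `(a_1, …, a_t)` and the history `h_t` to a treatment. -/
abbrev Policy (𝓐 𝓛 : Fin τ → Type) : Type :=
  ∀ t : Fin τ, SbarN 𝓐 (t.val + 1) → Hist 𝓐 𝓛 t → 𝓐 t

variable {𝓐 𝓛 : Fin τ → Type}

/-- The empty augmented history `s̄_0`. -/
def emptySbar (𝓐 : Fin τ → Type) : SbarN 𝓐 0 :=
  fun s => absurd s.2 (Nat.not_lt_zero _)

def restrictSb {tp tp' : ℕ} (h : tp' ≤ tp) (sb : SbarN 𝓐 tp) : SbarN 𝓐 tp' :=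
  fun s => sb ⟨s.1, lt_of_lt_of_le s.2 h⟩

/-- Append a treatment value at time `t` to an augmented history `s̄_{t-1}`. -/
def snoc {t : Fin τ} (sb : SbarN 𝓐 t.val) (a : 𝓐 t) : SbarN 𝓐 (t.val + 1) :=
  fun s =>
    if h : s.1 = t then cast (congrArg 𝓐 h).symm a
    else sb ⟨s.1, lt_of_le_of_ne (Nat.lt_succ_iff.mp s.2) (fun hv => h (Fin.ext hv))⟩

/-- Extension of an augmented history: treatment values at times `tp ≤ u ≤ k` (0-based),
i.e. the summation variables `s_{t+1}, …, s_k` of the paper. -/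
abbrev Ext (𝓐 : Fin τ → Type) (tp : ℕ) (k : Fin τ) : Type :=
  ∀ s : {s : Fin τ // tp ≤ s.val ∧ s.val ≤ k.val}, 𝓐 s.1

def mergeExt {tp : ℕ} {k : Fin τ} (sb : SbarN 𝓐 tp) (e : Ext 𝓐 tp k) :
    SbarN 𝓐 (k.val + 1) :=
  fun s =>
    if h : s.1.val < tp then sb ⟨s.1, h⟩
    else e ⟨s.1, ⟨not_lt.mp h, Nat.lt_succ_iff.mp s.2⟩⟩

/-- The observed data structure `Z = (L_1, A_1, …, L_τ, A_τ, Y)` with its law `μ`. -/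
structure Model (𝓐 𝓛 : Fin τ → Type) (Ω : Type) [MeasurableSpace Ω] where
  μ : Measure Ω
  L : ∀ t : Fin τ, Ω → 𝓛 t
  A : ∀ t : Fin τ, Ω → 𝓐 t
  Y : Ω → ℝ

variable {Ω : Type} [MeasurableSpace Ω]

/-- The observed history process `ω ↦ H_t(ω)`. -/
def Model.Hproc (M : Model 𝓐 𝓛 Ω) (t : Fin τ) (ω : Ω) : Hist 𝓐 𝓛 t :=
  (fun s => M.L s.1 ω, fun s => M.A s.1 ω)

/-- The event `{H_t = h}`. -/
def Model.histEvent (M : Model 𝓐 𝓛 Ω) (t : Fin τ) (h : Hist 𝓐 𝓛 t) : Set Ω :=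
  {ω | M.Hproc t ω = h}

/-- The event `{A_t = a, H_t = h}`. -/
def Model.condEvent (M : Model 𝓐 𝓛 Ω) (t : Fin τ) (a : 𝓐 t) (h : Hist 𝓐 𝓛 t) : Set Ω :=
  {ω | M.A t ω = a} ∩ M.histEvent t h

/-- Conditional expectation given an event, defined as a ratio. -/
noncomputable def condExpOn (μ : Measure Ω) (S : Set Ω) (X : Ω → ℝ) : ℝ :=
  (∫ ω in S, X ω ∂μ) / (μ S).toReal

/-- The true treatment mechanism `g_t(a ∣ h) = P(A_t = a ∣ H_t = h)`. -/
noncomputable def Model.g (M : Model 𝓐 𝓛 Ω) (t : Fin τ) (a : 𝓐 t) (h : Hist 𝓐 𝓛 t) : ℝ :=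
  (M.μ (M.condEvent t a h)).toReal / (M.μ (M.histEvent t h)).toReal

/-- Full positivity: `P(A_t = a, H_t = h) > 0` for every `t`, `a`, `h`. -/
def Model.Positivity (M : Model 𝓐 𝓛 Ω) : Prop :=
  ∀ (t : Fin τ) (a : 𝓐 t) (h : Hist 𝓐 𝓛 t), 0 < M.μ (M.condEvent t a h)

/-- Measurability of the observed variables. -/
def Model.Meas (M : Model 𝓐 𝓛 Ω) : Prop :=
  (∀ (t : Fin τ) (a : 𝓐 t), MeasurableSet {ω | M.A t ω = a}) ∧
  (∀ (t : Fin τ) (l : 𝓛 t), MeasurableSet {ω | M.L t ω = l}) ∧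
  Measurable M.Y

/-- `q_t` obtained from `m_t`:
`q_t(s̄_{t-1}, a_t, h_t) = m_t((s̄_{t-1},a_t), d_t((s̄_{t-1},a_t), h_t), h_t)`. -/
def qOf (d : Policy 𝓐 𝓛)
    (m : ∀ t : Fin τ, SbarN 𝓐 (t.val + 1) → 𝓐 t → Hist 𝓐 𝓛 t → ℝ)
    (t : Fin τ) (sb : SbarN 𝓐 t.val) (a : 𝓐 t) (h : Hist 𝓐 𝓛 t) : ℝ :=
  m t (snoc sb a) (d t (snoc sb a) h) h

/-- `ω ↦ q_{k+1}(s̄_k, A_{k+1}(ω), H_{k+1}(ω))`, with the convention `q_{τ+1} := Y`. -/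
def Model.qNext (M : Model 𝓐 𝓛 Ω)
    (q : ∀ t : Fin τ, SbarN 𝓐 t.val → 𝓐 t → Hist 𝓐 𝓛 t → ℝ)
    (k : Fin τ) (sb : SbarN 𝓐 (k.val + 1)) (ω : Ω) : ℝ :=
  if h : k.val + 1 < τ then
    q ⟨k.val + 1, h⟩ sb (M.A ⟨k.val + 1, h⟩ ω) (M.Hproc ⟨k.val + 1, h⟩ ω)
  else M.Y ω

/-- `m` is the (true) sequential-regression family for the policy `d`:
`m_t(s̄_t, a_t, h_t) = E[q_{t+1}(s̄_t, A_{t+1}, H_{t+1}) ∣ A_t = a_t, H_t = h_t]`,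
with `q_{τ+1} = Y` (so at `t = τ` this reads `m_τ(a_τ,h_τ) = E[Y ∣ A_τ = a_τ, H_τ = h_τ]`,
extended independently of `s̄_τ`). -/
def IsSeqReg (M : Model 𝓐 𝓛 Ω) (d : Policy 𝓐 𝓛)
    (m : ∀ t : Fin τ, SbarN 𝓐 (t.val + 1) → 𝓐 t → Hist 𝓐 𝓛 t → ℝ) : Prop :=
  ∀ (t : Fin τ) (sb : SbarN 𝓐 (t.val + 1)) (a : 𝓐 t) (h : Hist 𝓐 𝓛 t),
    m t sb a h = condExpOn M.μ (M.condEvent t a h) (M.qNext (qOf d m) t sb)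

/-- The parameter `θ = E[q_1(A_1, H_1)]`. -/
noncomputable def theta (hτ : 0 < τ) (M : Model 𝓐 𝓛 Ω) (d : Policy 𝓐 𝓛)
    (m : ∀ t : Fin τ, SbarN 𝓐 (t.val + 1) → 𝓐 t → Hist 𝓐 𝓛 t → ℝ) : ℝ :=
  ∫ ω, qOf d m ⟨0, hτ⟩ (emptySbar 𝓐) (M.A ⟨0, hτ⟩ ω) (M.Hproc ⟨0, hτ⟩ ω) ∂M.μ

variable [∀ t, DecidableEq (𝓐 t)] [∀ t, Fintype (𝓐 t)]

/-- Indicator `D_{t,k}(s̄_k)`: all treatments at times `tp ≤ u ≤ k` (0-based) follow the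
policy applied to the augmented history. -/
noncomputable def Dind (M : Model 𝓐 𝓛 Ω) (d : Policy 𝓐 𝓛) (tp : ℕ) (k : Fin τ)
    (sb : SbarN 𝓐 (k.val + 1)) (ω : Ω) : ℝ :=
  ∏ u : Fin τ,
    if hu : tp ≤ u.val ∧ u.val ≤ k.val then
      (if M.A u ω = d u (restrictSb (Nat.succ_le_succ hu.2) sb) (M.Hproc u ω) then 1 else 0)
    else 1

/-- Density-ratio weight `∏_{u} g'_u(s_u ∣ H_u)/g'_u(A_u ∣ H_u)` over times `tp ≤ u ≤ k`. -/
noncomputable def weight (M : Model 𝓐 𝓛 Ω) (g' : ∀ t : Fin τ, 𝓐 t → Hist 𝓐 𝓛 t → ℝ)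
    (tp : ℕ) (k : Fin τ) (sb : SbarN 𝓐 (k.val + 1)) (ω : Ω) : ℝ :=
  ∏ u : Fin τ,
    if hu : tp ≤ u.val ∧ u.val ≤ k.val then
      g' u (sb ⟨u, Nat.lt_succ_of_le hu.2⟩) (M.Hproc u ω) / g' u (M.A u ω) (M.Hproc u ω)
    else 1

/-- The pseudo-outcome `φ_{t+1}(s̄_t, Z; η')`; here `tp` is the paper's `t` (so times are
0-based internally: the paper's time `u` is the index `u - 1`). -/
noncomputable def phi (M : Model 𝓐 𝓛 Ω) (d : Policy 𝓐 𝓛)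
    (g' : ∀ t : Fin τ, 𝓐 t → Hist 𝓐 𝓛 t → ℝ)
    (m' : ∀ t : Fin τ, SbarN 𝓐 (t.val + 1) → 𝓐 t → Hist 𝓐 𝓛 t → ℝ)
    (tp : ℕ) (sb : SbarN 𝓐 tp) (ω : Ω) : ℝ :=
  (∑ k : Fin τ,
    if tp ≤ k.val then
      ∑ e : Ext 𝓐 tp k,
        Dind M d tp k (mergeExt sb e) ω * weight M g' tp k (mergeExt sb e) ω *
          (M.qNext (qOf d m') k (mergeExt sb e) ω -
            m' k (mergeExt sb e) (M.A k ω) (M.Hproc k ω))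
    else 0) +
  (if h : tp < τ then
      qOf d m' ⟨tp, h⟩ sb (M.A ⟨tp, h⟩ ω) (M.Hproc ⟨tp, h⟩ ω)
    else M.Y ω)

/-- The remainder `Rem_t(s̄_t, a_t, h_t; η')` of Theorem 2, as a function of the conditioning
event `S` (`S = {A_t = a_t, H_t = h_t}`, or `S = univ` for `t = 0`). -/
noncomputable def rem (M : Model 𝓐 𝓛 Ω) (d : Policy 𝓐 𝓛)
    (g' : ∀ t : Fin τ, 𝓐 t → Hist 𝓐 𝓛 t → ℝ)
    (m' mtrue : ∀ t : Fin τ, SbarN 𝓐 (t.val + 1) → 𝓐 t → Hist 𝓐 𝓛 t → ℝ)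
    (tp : ℕ) (sb : SbarN 𝓐 tp) (S : Set Ω) : ℝ :=
  ∑ k : Fin τ,
    if tp ≤ k.val then
      ∑ e : Ext 𝓐 tp k,
        condExpOn M.μ S (fun ω =>
          Dind M d tp k (mergeExt sb e) ω *
          (∏ r : Fin τ,
            if hr : tp ≤ r.val ∧ r.val < k.val then
              g' r (mergeExt sb e ⟨r, Nat.lt_succ_of_lt hr.2⟩) (M.Hproc r ω) /
                g' r (M.A r ω) (M.Hproc r ω)
            else 1) *
          (M.g k (mergeExt sb e ⟨k, Nat.lt_succ_self _⟩) (M.Hproc k ω) /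
              M.g k (M.A k ω) (M.Hproc k ω) -
            g' k (mergeExt sb e ⟨k, Nat.lt_succ_self _⟩) (M.Hproc k ω) /
              g' k (M.A k ω) (M.Hproc k ω)) *
          (m' k (mergeExt sb e) (M.A k ω) (M.Hproc k ω) -
            mtrue k (mergeExt sb e) (M.A k ω) (M.Hproc k ω)))
    else 0

set_option linter.unusedVariables false
set_option linter.unusedSectionVars false

section Infra
variable {τ : ℕ} {𝓐 𝓛 : Fin τ → Type} {Ω : Type} [MeasurableSpace Ω]
variable [∀ t, DecidableEq (𝓐 t)] [∀ t, Fintype (𝓐 t)]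

/-- Half-open extension type: treatments at times `tp ≤ u < K`. -/
abbrev ExtH (𝓐 : Fin τ → Type) (tp K : ℕ) : Type :=
  ∀ s : {s : Fin τ // tp ≤ s.val ∧ s.val < K}, 𝓐 s.1

def mergeH {tp K : ℕ} (sb : SbarN 𝓐 tp) (e : ExtH 𝓐 tp K) : SbarN 𝓐 K :=
  fun s => if h : s.1.val < tp then sb ⟨s.1, h⟩ else e ⟨s.1, ⟨le_of_not_gt h, s.2⟩⟩

def extEquiv {tp : ℕ} {k : Fin τ} : Ext 𝓐 tp k ≃ ExtH 𝓐 tp (k.val + 1) where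
  toFun e := fun s => e ⟨s.1, ⟨s.2.1, Nat.lt_succ_iff.mp s.2.2⟩⟩
  invFun e := fun s => e ⟨s.1, ⟨s.2.1, Nat.lt_succ_of_le s.2.2⟩⟩
  left_inv e := rfl
  right_inv e := rfl

lemma mergeExt_eq {tp : ℕ} {k : Fin τ} (sb : SbarN 𝓐 tp) (e : Ext 𝓐 tp k) :
    mergeExt sb e = mergeH sb (extEquiv e) := rfl

lemma restrictSb_self {tp : ℕ} (h : tp ≤ tp) (sb : SbarN 𝓐 tp) : restrictSb h sb = sb := rfl

lemma mergeH_zero {tp : ℕ} (sb : SbarN 𝓐 tp) (e : ExtH 𝓐 tp tp) : mergeH sb e = sb := by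
  funext s; exact dif_pos s.2

lemma snoc_last {t : Fin τ} (sb : SbarN 𝓐 t.val) (a : 𝓐 t) :
    snoc sb a ⟨t, Nat.lt_succ_self _⟩ = a := by
  show dite _ _ _ = a
  rw [dif_pos rfl]
  exact cast_eq _ a

lemma restrictSb_snoc {t : Fin τ} {tp' : ℕ} (h' : tp' ≤ t.val) (h : tp' ≤ t.val + 1)
    (sb : SbarN 𝓐 t.val) (a : 𝓐 t) :
    restrictSb h (snoc sb a) = restrictSb h' sb := by
  funext s
  show dite _ _ _ = _
  rw [dif_neg (fun hv : (⟨s.1, _⟩ : {u : Fin τ // u.val < t.val+1}).1 = t => by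
    exact absurd (hv ▸ (lt_of_lt_of_le s.2 h')) (lt_irrefl _))]
  rfl

end Infra
section Infra2
variable {τ : ℕ} {𝓐 𝓛 : Fin τ → Type} {Ω : Type} [MeasurableSpace Ω]
variable [∀ t, DecidableEq (𝓐 t)] [∀ t, Fintype (𝓐 t)]

/-- Restriction of a history at time `k` to a time `u ≤ k`. -/
def histRestrict {k : Fin τ} (u : Fin τ) (hu : u.val ≤ k.val) (h : Hist 𝓐 𝓛 k) :
    Hist 𝓐 𝓛 u :=
  (fun s => h.1 ⟨s.1, by exact le_trans s.2 hu⟩,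
   fun s => h.2 ⟨s.1, by exact lt_of_lt_of_le s.2 hu⟩)

lemma Hproc_restrict (M : Model 𝓐 𝓛 Ω) {k : Fin τ} (u : Fin τ) (hu : u.val ≤ k.val)
    (ω : Ω) : M.Hproc u ω = histRestrict u hu (M.Hproc k ω) := rfl

lemma A_restrict (M : Model 𝓐 𝓛 Ω) {k : Fin τ} (u : Fin τ) (hu : u.val < k.val)
    (ω : Ω) : M.A u ω = (M.Hproc k ω).2 ⟨u, hu⟩ := rfl

/-- `ω ↦ G (A_k ω) (H_k ω)`. -/
def histFun (M : Model 𝓐 𝓛 Ω) (k : Fin τ) (G : 𝓐 k → Hist 𝓐 𝓛 k → ℝ) : Ω → ℝ :=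
  fun ω => G (M.A k ω) (M.Hproc k ω)

/-- Half-open-range analogue of `Dind`: indices `tp ≤ u < K`. -/
noncomputable def DindN (M : Model 𝓐 𝓛 Ω) (d : Policy 𝓐 𝓛) (tp K : ℕ)
    (sb : SbarN 𝓐 K) (ω : Ω) : ℝ :=
  ∏ u : Fin τ,
    if hu : tp ≤ u.val ∧ u.val < K then
      (if M.A u ω = d u (restrictSb hu.2 sb) (M.Hproc u ω) then 1 else 0)
    else 1

/-- Half-open-range analogue of `weight`. -/
noncomputable def weightN (M : Model 𝓐 𝓛 Ω) (g' : ∀ t : Fin τ, 𝓐 t → Hist 𝓐 𝓛 t → ℝ)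
    (tp K : ℕ) (sb : SbarN 𝓐 K) (ω : Ω) : ℝ :=
  ∏ u : Fin τ,
    if hu : tp ≤ u.val ∧ u.val < K then
      g' u (sb ⟨u, hu.2⟩) (M.Hproc u ω) / g' u (M.A u ω) (M.Hproc u ω)
    else 1

lemma Dind_eq_DindN (M : Model 𝓐 𝓛 Ω) (d : Policy 𝓐 𝓛) (tp : ℕ) (k : Fin τ)
    (sb : SbarN 𝓐 (k.val + 1)) (ω : Ω) :
    Dind M d tp k sb ω = DindN M d tp (k.val + 1) sb ω := by
  refine Finset.prod_congr rfl fun u _ => ?_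
  by_cases h : tp ≤ u.val ∧ u.val ≤ k.val
  · rw [dif_pos h, dif_pos ⟨h.1, Nat.lt_succ_of_le h.2⟩]
  · rw [dif_neg h, dif_neg (fun hc => h ⟨hc.1, Nat.lt_succ_iff.mp hc.2⟩)]

lemma weight_eq_weightN (M : Model 𝓐 𝓛 Ω) (g' : ∀ t : Fin τ, 𝓐 t → Hist 𝓐 𝓛 t → ℝ)
    (tp : ℕ) (k : Fin τ) (sb : SbarN 𝓐 (k.val + 1)) (ω : Ω) :
    weight M g' tp k sb ω = weightN M g' tp (k.val + 1) sb ω := by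
  refine Finset.prod_congr rfl fun u _ => ?_
  by_cases h : tp ≤ u.val ∧ u.val ≤ k.val
  · rw [dif_pos h, dif_pos ⟨h.1, Nat.lt_succ_of_le h.2⟩]
  · rw [dif_neg h, dif_neg (fun hc => h ⟨hc.1, Nat.lt_succ_iff.mp hc.2⟩)]

/-- Pseudo-outcome at level `K`: `q_K(s̄, A_K, H_K)` with `m₂` plugged in, or `Y` at `K = τ`. -/
noncomputable def QT (M : Model 𝓐 𝓛 Ω) (d : Policy 𝓐 𝓛)
    (m₂ : ∀ t : Fin τ, SbarN 𝓐 (t.val + 1) → 𝓐 t → Hist 𝓐 𝓛 t → ℝ)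
    (K : ℕ) (sb : SbarN 𝓐 K) (ω : Ω) : ℝ :=
  if h : K < τ then qOf d m₂ ⟨K, h⟩ sb (M.A ⟨K, h⟩ ω) (M.Hproc ⟨K, h⟩ ω) else M.Y ω

lemma qNext_eq_QT (M : Model 𝓐 𝓛 Ω) (d : Policy 𝓐 𝓛)
    (m₂ : ∀ t : Fin τ, SbarN 𝓐 (t.val + 1) → 𝓐 t → Hist 𝓐 𝓛 t → ℝ)
    (k : Fin τ) (sb : SbarN 𝓐 (k.val + 1)) (ω : Ω) :
    M.qNext (qOf d m₂) k sb ω = QT M d m₂ (k.val + 1) sb ω := rfl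

/-- The `T`-process: `∑_e D·W·q_K(merge(s̄,e), A_K, H_K)`. -/
noncomputable def TT (M : Model 𝓐 𝓛 Ω) (d : Policy 𝓐 𝓛)
    (g' : ∀ t : Fin τ, 𝓐 t → Hist 𝓐 𝓛 t → ℝ)
    (m₂ : ∀ t : Fin τ, SbarN 𝓐 (t.val + 1) → 𝓐 t → Hist 𝓐 𝓛 t → ℝ)
    (tp K : ℕ) (sb : SbarN 𝓐 tp) (ω : Ω) : ℝ :=
  ∑ e : ExtH 𝓐 tp K,
    DindN M d tp K (mergeH sb e) ω * weightN M g' tp K (mergeH sb e) ω *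
      QT M d m₂ K (mergeH sb e) ω

/-- The correction term at time `k` in `phi`. -/
noncomputable def Cterm (M : Model 𝓐 𝓛 Ω) (d : Policy 𝓐 𝓛)
    (g' : ∀ t : Fin τ, 𝓐 t → Hist 𝓐 𝓛 t → ℝ)
    (m' : ∀ t : Fin τ, SbarN 𝓐 (t.val + 1) → 𝓐 t → Hist 𝓐 𝓛 t → ℝ)
    (tp : ℕ) (sb : SbarN 𝓐 tp) (k : Fin τ) (ω : Ω) : ℝ :=
  ∑ e : Ext 𝓐 tp k,
    Dind M d tp k (mergeExt sb e) ω * weight M g' tp k (mergeExt sb e) ω *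
      (M.qNext (qOf d m') k (mergeExt sb e) ω -
        m' k (mergeExt sb e) (M.A k ω) (M.Hproc k ω))

instance instUniqueExtH {tp : ℕ} : Unique (ExtH 𝓐 tp tp) where
  default := fun s => absurd (lt_of_le_of_lt s.2.1 s.2.2) (lt_irrefl _)
  uniq := fun e => funext fun s => absurd (lt_of_le_of_lt s.2.1 s.2.2) (lt_irrefl _)

lemma phi_eq (M : Model 𝓐 𝓛 Ω) (d : Policy 𝓐 𝓛)
    (g' : ∀ t : Fin τ, 𝓐 t → Hist 𝓐 𝓛 t → ℝ)
    (m' : ∀ t : Fin τ, SbarN 𝓐 (t.val + 1) → 𝓐 t → Hist 𝓐 𝓛 t → ℝ)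
    (tp : ℕ) (htp : tp < τ) (sb : SbarN 𝓐 tp) (ω : Ω) :
    phi M d g' m' tp sb ω =
      (∑ k : Fin τ, if tp ≤ k.val then Cterm M d g' m' tp sb k ω else 0) +
        TT M d g' m' tp tp sb ω := by
  unfold phi Cterm TT
  congr 1
  rw [Fintype.sum_unique, mergeH_zero]
  have h1 : DindN M d tp tp sb ω = 1 :=
    Finset.prod_eq_one fun u _ => dif_neg (fun hc => absurd (lt_of_le_of_lt hc.1 hc.2) (lt_irrefl _))
  have h2 : weightN M g' tp tp sb ω = 1 :=
    Finset.prod_eq_one fun u _ => dif_neg (fun hc => absurd (lt_of_le_of_lt hc.1 hc.2) (lt_irrefl _))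
  rw [h1, h2, one_mul, one_mul]
  rfl

end Infra2
section Infra3
variable {τ : ℕ} {𝓐 𝓛 : Fin τ → Type} {Ω : Type} [MeasurableSpace Ω]
variable [∀ t, DecidableEq (𝓐 t)] [∀ t, Fintype (𝓐 t)]

def extSnocEquiv {tp : ℕ} {k : Fin τ} (htp : tp ≤ k.val) :
    ExtH 𝓐 tp (k.val + 1) ≃ ExtH 𝓐 tp k.val × 𝓐 k where
  toFun e := (fun s => e ⟨s.1, ⟨s.2.1, Nat.lt_succ_of_lt s.2.2⟩⟩,
              e ⟨k, ⟨htp, Nat.lt_succ_self _⟩⟩)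
  invFun p := fun s =>
    if h : s.1 = k then cast (congrArg 𝓐 h).symm p.2
    else p.1 ⟨s.1, ⟨s.2.1, lt_of_le_of_ne (Nat.lt_succ_iff.mp s.2.2)
      (fun hv => h (Fin.ext hv))⟩⟩
  left_inv e := by
    funext s
    rcases s with ⟨u, hu⟩
    by_cases h : u = k
    · subst h
      show dite _ _ _ = _
      rw [dif_pos rfl]
      exact cast_eq _ _
    · show dite _ _ _ = _
      rw [dif_neg h]
  right_inv p := by
    rcases p with ⟨e, b⟩
    refine Prod.ext ?_ ?_
    · funext s
      show dite _ _ _ = _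
      rw [dif_neg (fun hv : s.1 = k => absurd (hv ▸ s.2.2) (lt_irrefl _))]
    · show dite _ _ _ = _
      rw [dif_pos rfl]
      exact cast_eq _ _

lemma mergeH_snoc {tp : ℕ} {k : Fin τ} (htp : tp ≤ k.val) (sb : SbarN 𝓐 tp)
    (e : ExtH 𝓐 tp k.val) (b : 𝓐 k) :
    mergeH sb ((extSnocEquiv htp).symm (e, b)) = snoc (mergeH sb e) b := by
  funext s
  rcases s with ⟨u, hu⟩
  show dite _ _ _ = dite _ _ _
  by_cases h : u = k
  · have hnp : ¬ u.val < tp := by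
      subst h; exact fun hc => absurd (lt_of_le_of_lt htp hc) (lt_irrefl _)
    rw [dif_neg hnp, dif_pos h]
    show dite _ _ _ = _
    rw [dif_pos h]
  · rw [dif_neg h]
    by_cases hp : u.val < tp
    · rw [dif_pos hp]
      show _ = dite _ _ _
      rw [dif_pos hp]
    · rw [dif_neg hp]
      show dite _ _ _ = dite _ _ _
      rw [dif_neg h, dif_neg hp]

lemma prod_split_at {k : Fin τ} (f g : Fin τ → ℝ) (hfk : ∀ u, u ≠ k → f u = g u)
    (hgk : g k = 1) : ∏ u, f u = (∏ u, g u) * f k := by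
  rw [Finset.prod_eq_prod_diff_singleton_mul (Finset.mem_univ k) f,
      Finset.prod_eq_prod_diff_singleton_mul (Finset.mem_univ k) g, hgk, mul_one]
  congr 1
  refine Finset.prod_congr rfl fun u hu => ?_
  exact hfk u (by simpa using (Finset.mem_sdiff.mp hu).2)

lemma DindN_snoc (M : Model 𝓐 𝓛 Ω) (d : Policy 𝓐 𝓛) {tp : ℕ} {k : Fin τ}
    (htp : tp ≤ k.val) (sb' : SbarN 𝓐 k.val) (b : 𝓐 k) (ω : Ω) :
    DindN M d tp (k.val + 1) (snoc sb' b) ω =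
      DindN M d tp k.val sb' ω *
        (if M.A k ω = d k (snoc sb' b) (M.Hproc k ω) then 1 else 0) := by
  unfold DindN
  refine (prod_split_at (k := k) _
    (fun u => if hu : tp ≤ u.val ∧ u.val < k.val then
      (if M.A u ω = d u (restrictSb hu.2 sb') (M.Hproc u ω) then 1 else 0) else 1)
    (fun u hne => ?_) (dif_neg ?_)).trans ?_
  · show _ = dite _ _ _
    by_cases hc : tp ≤ u.val ∧ u.val < k.val
    · rw [dif_pos ⟨hc.1, Nat.lt_succ_of_lt hc.2⟩, dif_pos hc]
      rw [restrictSb_snoc (Nat.succ_le_of_lt hc.2) _ sb' b]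
    · rw [dif_neg hc, dif_neg (fun hc2 => hc ⟨hc2.1,
        lt_of_le_of_ne (Nat.lt_succ_iff.mp hc2.2) (fun hv => hne (Fin.ext hv))⟩)]
  · exact fun hc => absurd hc.2 (lt_irrefl _)
  · congr 1
    rw [dif_pos ⟨htp, Nat.lt_succ_self _⟩]
    rfl

lemma weightN_snoc (M : Model 𝓐 𝓛 Ω) (g' : ∀ t : Fin τ, 𝓐 t → Hist 𝓐 𝓛 t → ℝ)
    {tp : ℕ} {k : Fin τ} (htp : tp ≤ k.val) (sb' : SbarN 𝓐 k.val) (b : 𝓐 k) (ω : Ω) :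
    weightN M g' tp (k.val + 1) (snoc sb' b) ω =
      weightN M g' tp k.val sb' ω *
        (g' k b (M.Hproc k ω) / g' k (M.A k ω) (M.Hproc k ω)) := by
  unfold weightN
  refine (prod_split_at (k := k) _
    (fun u => if hu : tp ≤ u.val ∧ u.val < k.val then
      g' u (sb' ⟨u, hu.2⟩) (M.Hproc u ω) / g' u (M.A u ω) (M.Hproc u ω) else 1)
    (fun u hne => ?_) (dif_neg ?_)).trans ?_
  · show _ = dite _ _ _
    by_cases hc : tp ≤ u.val ∧ u.val < k.val
    · rw [dif_pos ⟨hc.1, Nat.lt_succ_of_lt hc.2⟩, dif_pos hc]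
      have hsb : (snoc sb' b) ⟨u, Nat.lt_succ_of_lt hc.2⟩ = sb' ⟨u, hc.2⟩ := by
        show dite _ _ _ = _
        rw [dif_neg hne]
      rw [hsb]
    · rw [dif_neg hc, dif_neg (fun hc2 => hc ⟨hc2.1,
        lt_of_le_of_ne (Nat.lt_succ_iff.mp hc2.2) (fun hv => hne (Fin.ext hv))⟩)]
  · exact fun hc => absurd hc.2 (lt_irrefl _)
  · congr 1
    rw [dif_pos ⟨htp, Nat.lt_succ_self _⟩, snoc_last]

end Infra3
section Meas
variable {τ : ℕ} {𝓐 𝓛 : Fin τ → Type} {Ω : Type} [MeasurableSpace Ω]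
variable [∀ t, DecidableEq (𝓐 t)] [∀ t, Fintype (𝓐 t)] [∀ t, Fintype (𝓛 t)]

/-- Bounded measurable real functions. -/
def Nice (X : Ω → ℝ) : Prop := Measurable X ∧ ∃ C, ∀ ω, |X ω| ≤ C

lemma Nice.integrable {μ : Measure Ω} [IsFiniteMeasure μ] {X : Ω → ℝ} (h : Nice X) :
    Integrable X μ := by
  obtain ⟨hX, C, hC⟩ := h
  exact (integrable_const C).mono' hX.aestronglyMeasurable
    (Filter.Eventually.of_forall (by simpa [Real.norm_eq_abs] using hC))

lemma Nice.const (c : ℝ) : Nice (fun _ : Ω => c) :=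
  ⟨measurable_const, |c|, fun _ => by simpa using le_abs_self c⟩

lemma Nice.mul {X Y : Ω → ℝ} (hX : Nice X) (hY : Nice Y) : Nice (fun ω => X ω * Y ω) := by
  obtain ⟨hXm, C₁, hC₁⟩ := hX
  obtain ⟨hYm, C₂, hC₂⟩ := hY
  refine ⟨hXm.mul hYm, |C₁| * |C₂|, fun ω => ?_⟩
  rw [abs_mul]
  exact mul_le_mul ((hC₁ ω).trans (le_abs_self _)) ((hC₂ ω).trans (le_abs_self _))
    (abs_nonneg _) (abs_nonneg _)

lemma Nice.add {X Y : Ω → ℝ} (hX : Nice X) (hY : Nice Y) : Nice (fun ω => X ω + Y ω) := by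
  obtain ⟨hXm, C₁, hC₁⟩ := hX
  obtain ⟨hYm, C₂, hC₂⟩ := hY
  exact ⟨hXm.add hYm, C₁ + C₂, fun ω => (abs_add_le _ _).trans (add_le_add (hC₁ ω) (hC₂ ω))⟩

lemma Nice.neg {X : Ω → ℝ} (hX : Nice X) : Nice (fun ω => -X ω) := by
  obtain ⟨hXm, C, hC⟩ := hX
  exact ⟨hXm.neg, C, fun ω => by rw [abs_neg]; exact hC ω⟩

lemma Nice.sub {X Y : Ω → ℝ} (hX : Nice X) (hY : Nice Y) : Nice (fun ω => X ω - Y ω) := by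
  simpa [sub_eq_add_neg] using hX.add hY.neg

lemma Nice.sum {ι : Type*} (s : Finset ι) (X : ι → Ω → ℝ) (h : ∀ i ∈ s, Nice (X i)) :
    Nice (fun ω => ∑ i ∈ s, X i ω) := by
  classical
  induction s using Finset.induction_on with
  | empty => simpa using Nice.const 0
  | insert _ _ hni ih =>
    rename_i a s
    simp only [Finset.sum_insert hni]
    exact (h a (Finset.mem_insert_self a s)).add
      (ih fun i hi => h i (Finset.mem_insert_of_mem hi))

lemma measurableSet_histEvent {M : Model 𝓐 𝓛 Ω} (hmeas : M.Meas) (t : Fin τ)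
    (h : Hist 𝓐 𝓛 t) : MeasurableSet (M.histEvent t h) := by
  have he : M.histEvent t h =
      (⋂ s : {s : Fin τ // s ≤ t}, {ω | M.L s.1 ω = h.1 s}) ∩
        (⋂ s : {s : Fin τ // s < t}, {ω | M.A s.1 ω = h.2 s}) := by
    ext ω
    simp [Model.histEvent, Model.Hproc, Prod.ext_iff, funext_iff]
  rw [he]
  exact (MeasurableSet.iInter fun s => hmeas.2.1 _ _).inter
    (MeasurableSet.iInter fun s => hmeas.1 _ _)

lemma measurableSet_condEvent {M : Model 𝓐 𝓛 Ω} (hmeas : M.Meas) (t : Fin τ)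
    (a : 𝓐 t) (h : Hist 𝓐 𝓛 t) : MeasurableSet (M.condEvent t a h) :=
  (hmeas.1 t a).inter (measurableSet_histEvent hmeas t h)

lemma mem_condEvent_A {M : Model 𝓐 𝓛 Ω} {t : Fin τ} {a : 𝓐 t} {h : Hist 𝓐 𝓛 t} {ω : Ω}
    (hω : ω ∈ M.condEvent t a h) : M.A t ω = a := hω.1

lemma mem_condEvent_H {M : Model 𝓐 𝓛 Ω} {t : Fin τ} {a : 𝓐 t} {h : Hist 𝓐 𝓛 t} {ω : Ω}
    (hω : ω ∈ M.condEvent t a h) : M.Hproc t ω = h := hω.2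

lemma histFun_eq_sum (M : Model 𝓐 𝓛 Ω) (k : Fin τ) (G : 𝓐 k → Hist 𝓐 𝓛 k → ℝ) :
    histFun M k G = fun ω => ∑ p : 𝓐 k × Hist 𝓐 𝓛 k,
      Set.indicator (M.condEvent k p.1 p.2) (fun _ => G p.1 p.2) ω := by
  classical
  funext ω
  rw [Finset.sum_eq_single (M.A k ω, M.Hproc k ω)]
  · exact (Set.indicator_of_mem
      (show ω ∈ M.condEvent k (M.A k ω) (M.Hproc k ω) from ⟨rfl, rfl⟩) _).symm
  · intro p _ hne
    refine Set.indicator_of_notMem (fun hc => hne ?_) _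
    exact Prod.ext (show M.A k ω = p.1 from hc.1).symm
      (show M.Hproc k ω = p.2 from hc.2).symm
  · intro hc
    exact absurd (Finset.mem_univ _) hc

lemma Nice.histFun {M : Model 𝓐 𝓛 Ω} (hmeas : M.Meas) (k : Fin τ)
    (G : 𝓐 k → Hist 𝓐 𝓛 k → ℝ) : Nice (histFun M k G) := by
  classical
  constructor
  · rw [histFun_eq_sum]
    exact Finset.measurable_sum _ fun p _ =>
      (measurable_const).indicator (measurableSet_condEvent hmeas k p.1 p.2)
  · refine ⟨∑ p : 𝓐 k × Hist 𝓐 𝓛 k, |G p.1 p.2|, fun ω => ?_⟩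
    exact Finset.single_le_sum (f := fun p : 𝓐 k × Hist 𝓐 𝓛 k => |G p.1 p.2|)
      (fun p _ => abs_nonneg _) (Finset.mem_univ (M.A k ω, M.Hproc k ω))

lemma histFun_eqOn {M : Model 𝓐 𝓛 Ω} (k : Fin τ) (G : 𝓐 k → Hist 𝓐 𝓛 k → ℝ)
    {a : 𝓐 k} {h : Hist 𝓐 𝓛 k} {ω : Ω} (hω : ω ∈ M.condEvent k a h) :
    histFun M k G ω = G a h := by
  unfold histFun
  rw [hω.1, hω.2]

lemma iUnion_condEvent (M : Model 𝓐 𝓛 Ω) (k : Fin τ) :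
    (⋃ p : 𝓐 k × Hist 𝓐 𝓛 k, M.condEvent k p.1 p.2) = Set.univ := by
  ext ω
  simp only [Set.mem_iUnion, Set.mem_univ, iff_true]
  exact ⟨(M.A k ω, M.Hproc k ω), rfl, rfl⟩

lemma disjoint_condEvent (M : Model 𝓐 𝓛 Ω) (k : Fin τ) :
    Pairwise (Function.onFun Disjoint
      (fun p : 𝓐 k × Hist 𝓐 𝓛 k => M.condEvent k p.1 p.2)) := by
  intro p q hpq
  refine Set.disjoint_left.mpr fun ω h1 h2 => hpq ?_
  exact Prod.ext (h1.1.symm.trans h2.1) (h1.2.symm.trans h2.2)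

lemma setIntegral_partition (M : Model 𝓐 𝓛 Ω) [IsProbabilityMeasure M.μ]
    (hmeas : M.Meas) (k : Fin τ) {X : Ω → ℝ} (hX : Integrable X M.μ)
    (S : Set Ω) (hS : MeasurableSet S) :
    ∫ ω in S, X ω ∂M.μ = ∑ p : 𝓐 k × Hist 𝓐 𝓛 k,
      ∫ ω in S ∩ M.condEvent k p.1 p.2, X ω ∂M.μ := by
  have hrw : S = ⋃ p : 𝓐 k × Hist 𝓐 𝓛 k, S ∩ M.condEvent k p.1 p.2 := by
    rw [← Set.inter_iUnion, iUnion_condEvent, Set.inter_univ]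
  have key := integral_iUnion (μ := M.μ) (f := X)
    (fun p : 𝓐 k × Hist 𝓐 𝓛 k => hS.inter (measurableSet_condEvent hmeas k p.1 p.2))
    ((disjoint_condEvent M k).mono fun p q h => h.mono Set.inter_subset_right
      Set.inter_subset_right) hX.integrableOn
  rw [← hrw] at key
  rw [key, tsum_fintype]

lemma setIntegral_histFun_mul {M : Model 𝓐 𝓛 Ω} (hmeas : M.Meas) (k : Fin τ)
    (G : 𝓐 k → Hist 𝓐 𝓛 k → ℝ) (R : Ω → ℝ) (a : 𝓐 k) (h : Hist 𝓐 𝓛 k) :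
    ∫ ω in M.condEvent k a h, histFun M k G ω * R ω ∂M.μ =
      G a h * ∫ ω in M.condEvent k a h, R ω ∂M.μ := by
  rw [← integral_const_mul]
  exact setIntegral_congr_fun (measurableSet_condEvent hmeas k a h)
    (fun ω hω => by rw [histFun_eqOn k G hω])

variable {M : Model 𝓐 𝓛 Ω}

lemma mu_condEvent_toReal_pos [IsProbabilityMeasure M.μ] (hpos : M.Positivity)
    (t : Fin τ) (a : 𝓐 t) (h : Hist 𝓐 𝓛 t) : 0 < (M.μ (M.condEvent t a h)).toReal :=
  ENNReal.toReal_pos (ne_of_gt (hpos t a h)) (measure_ne_top _ _)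

lemma histEvent_eq_iUnion (t : Fin τ) (h : Hist 𝓐 𝓛 t) :
    M.histEvent t h = ⋃ a : 𝓐 t, M.condEvent t a h := by
  ext ω
  simp only [Set.mem_iUnion]
  constructor
  · intro hω; exact ⟨M.A t ω, rfl, hω⟩
  · rintro ⟨a, _, hω⟩; exact hω

lemma mu_histEvent_toReal [IsProbabilityMeasure M.μ] (hmeas : M.Meas)
    (t : Fin τ) (h : Hist 𝓐 𝓛 t) :
    (M.μ (M.histEvent t h)).toReal = ∑ a : 𝓐 t, (M.μ (M.condEvent t a h)).toReal := by
  rw [histEvent_eq_iUnion, measure_iUnion ?_ (fun a => measurableSet_condEvent hmeas t a h),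
    tsum_fintype, ENNReal.toReal_sum (fun a _ => measure_ne_top _ _)]
  intro a b hab
  refine Set.disjoint_left.mpr fun ω h1 h2 => hab ?_
  exact h1.1.symm.trans h2.1

lemma mu_histEvent_toReal_pos [IsProbabilityMeasure M.μ] (hmeas : M.Meas)
    (hpos : M.Positivity) [∀ t, Nonempty (𝓐 t)] (t : Fin τ) (h : Hist 𝓐 𝓛 t) :
    0 < (M.μ (M.histEvent t h)).toReal := by
  rw [mu_histEvent_toReal hmeas]
  have hne : (Finset.univ : Finset (𝓐 t)).Nonempty := Finset.univ_nonempty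
  refine Finset.sum_pos (fun a _ => mu_condEvent_toReal_pos hpos t a h) hne

lemma g_mul_hist [IsProbabilityMeasure M.μ] (hmeas : M.Meas) (hpos : M.Positivity)
    [∀ t, Nonempty (𝓐 t)] (t : Fin τ) (a : 𝓐 t) (h : Hist 𝓐 𝓛 t) :
    M.g t a h * (M.μ (M.histEvent t h)).toReal = (M.μ (M.condEvent t a h)).toReal := by
  unfold Model.g
  rw [div_mul_cancel₀]
  exact ne_of_gt (mu_histEvent_toReal_pos hmeas hpos t h)

lemma g_pos [IsProbabilityMeasure M.μ] (hmeas : M.Meas) (hpos : M.Positivity)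
    [∀ t, Nonempty (𝓐 t)] (t : Fin τ) (a : 𝓐 t) (h : Hist 𝓐 𝓛 t) : 0 < M.g t a h :=
  div_pos (mu_condEvent_toReal_pos hpos t a h) (mu_histEvent_toReal_pos hmeas hpos t h)

lemma setIntegral_qNext [IsProbabilityMeasure M.μ] (hpos : M.Positivity)
    {d : Policy 𝓐 𝓛} {m : ∀ t : Fin τ, SbarN 𝓐 (t.val + 1) → 𝓐 t → Hist 𝓐 𝓛 t → ℝ}
    (hm : IsSeqReg M d m) (k : Fin τ) (sb : SbarN 𝓐 (k.val + 1)) (a : 𝓐 k)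
    (h : Hist 𝓐 𝓛 k) :
    ∫ ω in M.condEvent k a h, M.qNext (qOf d m) k sb ω ∂M.μ =
      m k sb a h * (M.μ (M.condEvent k a h)).toReal := by
  rw [hm k sb a h]
  unfold condExpOn
  rw [div_mul_cancel₀]
  exact ne_of_gt (mu_condEvent_toReal_pos hpos k a h)

end Meas
section Infra5
variable {τ : ℕ} {𝓐 𝓛 : Fin τ → Type} {Ω : Type} [MeasurableSpace Ω]
variable [∀ t, DecidableEq (𝓐 t)] [∀ t, Fintype (𝓐 t)] [∀ t, Fintype (𝓛 t)]

lemma Nice.prod {ι : Type*} (s : Finset ι) (X : ι → Ω → ℝ) (h : ∀ i ∈ s, Nice (X i)) :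
    Nice (fun ω => ∏ i ∈ s, X i ω) := by
  classical
  induction s using Finset.induction_on with
  | empty => simpa using Nice.const 1
  | insert _ _ hni ih =>
    rename_i a s
    simp only [Finset.prod_insert hni]
    exact (h a (Finset.mem_insert_self a s)).mul
      (ih fun i hi => h i (Finset.mem_insert_of_mem hi))

/-- `D·W` over times `tp ≤ u < k` as a function of the history at time `k`. -/
noncomputable def DWpreF (d : Policy 𝓐 𝓛) (g' : ∀ t : Fin τ, 𝓐 t → Hist 𝓐 𝓛 t → ℝ)
    (tp : ℕ) (k : Fin τ) (sb : SbarN 𝓐 k.val) (h : Hist 𝓐 𝓛 k) : ℝ :=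
  ∏ u : Fin τ,
    if hu : tp ≤ u.val ∧ u.val < k.val then
      (if h.2 ⟨u, hu.2⟩ = d u (restrictSb hu.2 sb) (histRestrict u (le_of_lt hu.2) h)
        then 1 else 0) *
      (g' u (sb ⟨u, hu.2⟩) (histRestrict u (le_of_lt hu.2) h) /
        g' u (h.2 ⟨u, hu.2⟩) (histRestrict u (le_of_lt hu.2) h))
    else 1

lemma DW_eq_DWpreF (M : Model 𝓐 𝓛 Ω) (d : Policy 𝓐 𝓛)
    (g' : ∀ t : Fin τ, 𝓐 t → Hist 𝓐 𝓛 t → ℝ) (tp : ℕ) (k : Fin τ)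
    (sb : SbarN 𝓐 k.val) (ω : Ω) :
    DindN M d tp k.val sb ω * weightN M g' tp k.val sb ω =
      DWpreF d g' tp k sb (M.Hproc k ω) := by
  unfold DindN weightN DWpreF
  rw [← Finset.prod_mul_distrib]
  refine Finset.prod_congr rfl fun u _ => ?_
  by_cases hu : tp ≤ u.val ∧ u.val < k.val
  · simp only [dif_pos hu]
    rfl
  · simp only [dif_neg hu]
    exact one_mul 1

lemma QT_lt (M : Model 𝓐 𝓛 Ω) (d : Policy 𝓐 𝓛)
    (m₂ : ∀ t : Fin τ, SbarN 𝓐 (t.val + 1) → 𝓐 t → Hist 𝓐 𝓛 t → ℝ)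
    (k : Fin τ) (sb : SbarN 𝓐 k.val) (ω : Ω) :
    QT M d m₂ k.val sb ω = qOf d m₂ k sb (M.A k ω) (M.Hproc k ω) := dif_pos k.isLt

/-- The full `D·W` at level `k.val+1` as a function of `(a_k, h_k)`. -/
noncomputable def Gfull (M : Model 𝓐 𝓛 Ω) (d : Policy 𝓐 𝓛)
    (g' : ∀ t : Fin τ, 𝓐 t → Hist 𝓐 𝓛 t → ℝ) (tp : ℕ) (k : Fin τ) (htp : tp ≤ k.val)
    (sb : SbarN 𝓐 tp) (f : ExtH 𝓐 tp (k.val + 1)) : 𝓐 k → Hist 𝓐 𝓛 k → ℝ :=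
  fun a h =>
    DWpreF d g' tp k (mergeH sb ((extSnocEquiv htp) f).1) h *
      ((if a = d k (mergeH sb f) h then 1 else 0) *
        (g' k ((extSnocEquiv htp f).2) h / g' k a h))

lemma DWfull_eq (M : Model 𝓐 𝓛 Ω) (d : Policy 𝓐 𝓛)
    (g' : ∀ t : Fin τ, 𝓐 t → Hist 𝓐 𝓛 t → ℝ) (tp : ℕ) (k : Fin τ) (htp : tp ≤ k.val)
    (sb : SbarN 𝓐 tp) (f : ExtH 𝓐 tp (k.val + 1)) (ω : Ω) :
    DindN M d tp (k.val + 1) (mergeH sb f) ω * weightN M g' tp (k.val + 1) (mergeH sb f) ω =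
      histFun M k (Gfull M d g' tp k htp sb f) ω := by
  have hmf : mergeH sb f = snoc (mergeH sb ((extSnocEquiv htp) f).1) ((extSnocEquiv htp) f).2 := by
    have h2 := mergeH_snoc htp sb ((extSnocEquiv htp) f).1 ((extSnocEquiv htp) f).2
    rwa [show ((extSnocEquiv htp).symm (((extSnocEquiv htp) f).1, ((extSnocEquiv htp) f).2)) = f
      from by rw [Prod.mk.eta]; exact (extSnocEquiv htp).symm_apply_apply f] at h2
  unfold histFun Gfull
  rw [hmf, DindN_snoc M d htp _ _ ω, weightN_snoc M g' htp _ _ ω,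
    ← hmf]
  rw [show ∀ x y z w : ℝ, x * y * (z * w) = x * z * (y * w) from fun x y z w => by ring,
    DW_eq_DWpreF]

variable {M : Model 𝓐 𝓛 Ω}

lemma nice_DindN (hmeas : M.Meas) (d : Policy 𝓐 𝓛) (tp K : ℕ) (sb : SbarN 𝓐 K) :
    Nice (DindN M d tp K sb) := by
  refine Nice.prod _ _ fun u _ => ?_
  by_cases hu : tp ≤ u.val ∧ u.val < K
  · simp only [dif_pos hu]
    exact Nice.histFun hmeas u (fun a h => if a = d u (restrictSb hu.2 sb) h then 1 else 0)
  · simp only [dif_neg hu]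
    exact Nice.const 1

lemma nice_weightN (hmeas : M.Meas) (g' : ∀ t : Fin τ, 𝓐 t → Hist 𝓐 𝓛 t → ℝ)
    (tp K : ℕ) (sb : SbarN 𝓐 K) : Nice (weightN M g' tp K sb) := by
  refine Nice.prod _ _ fun u _ => ?_
  by_cases hu : tp ≤ u.val ∧ u.val < K
  · simp only [dif_pos hu]
    exact Nice.histFun hmeas u (fun a h => g' u (sb ⟨u, hu.2⟩) h / g' u a h)
  · simp only [dif_neg hu]
    exact Nice.const 1

lemma nice_Y (hmeas : M.Meas) (hbdd : ∃ C, ∀ ω, |M.Y ω| ≤ C) : Nice M.Y :=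
  ⟨hmeas.2.2, hbdd⟩

lemma nice_QT (hmeas : M.Meas) (hbdd : ∃ C, ∀ ω, |M.Y ω| ≤ C) (d : Policy 𝓐 𝓛)
    (m₂ : ∀ t : Fin τ, SbarN 𝓐 (t.val + 1) → 𝓐 t → Hist 𝓐 𝓛 t → ℝ)
    (K : ℕ) (sb : SbarN 𝓐 K) : Nice (QT M d m₂ K sb) := by
  unfold QT
  by_cases hK : K < τ
  · simp only [dif_pos hK]
    exact Nice.histFun hmeas ⟨K, hK⟩ (qOf d m₂ ⟨K, hK⟩ sb)
  · simp only [dif_neg hK]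
    exact nice_Y hmeas hbdd

lemma nice_qNext (hmeas : M.Meas) (hbdd : ∃ C, ∀ ω, |M.Y ω| ≤ C) (d : Policy 𝓐 𝓛)
    (m₂ : ∀ t : Fin τ, SbarN 𝓐 (t.val + 1) → 𝓐 t → Hist 𝓐 𝓛 t → ℝ)
    (k : Fin τ) (sb : SbarN 𝓐 (k.val + 1)) : Nice (M.qNext (qOf d m₂) k sb) :=
  nice_QT hmeas hbdd d m₂ (k.val + 1) sb

lemma nice_TT (hmeas : M.Meas) (hbdd : ∃ C, ∀ ω, |M.Y ω| ≤ C) (d : Policy 𝓐 𝓛)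
    (g' : ∀ t : Fin τ, 𝓐 t → Hist 𝓐 𝓛 t → ℝ)
    (m₂ : ∀ t : Fin τ, SbarN 𝓐 (t.val + 1) → 𝓐 t → Hist 𝓐 𝓛 t → ℝ)
    (tp K : ℕ) (sb : SbarN 𝓐 tp) : Nice (TT M d g' m₂ tp K sb) := by
  refine Nice.sum _ _ fun e _ => ?_
  exact ((nice_DindN hmeas d tp K _).mul (nice_weightN hmeas g' tp K _)).mul
    (nice_QT hmeas hbdd d m₂ K _)

lemma nice_Cterm (hmeas : M.Meas) (hbdd : ∃ C, ∀ ω, |M.Y ω| ≤ C) (d : Policy 𝓐 𝓛)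
    (g' : ∀ t : Fin τ, 𝓐 t → Hist 𝓐 𝓛 t → ℝ)
    (m' : ∀ t : Fin τ, SbarN 𝓐 (t.val + 1) → 𝓐 t → Hist 𝓐 𝓛 t → ℝ)
    (tp : ℕ) (sb : SbarN 𝓐 tp) (k : Fin τ) : Nice (Cterm M d g' m' tp sb k) := by
  refine Nice.sum _ _ fun e _ => ?_
  have hD : Nice (Dind M d tp k (mergeExt sb e)) := by
    have h1 := nice_DindN hmeas d tp (k.val+1) (mergeExt sb e)
    rwa [show DindN M d tp (k.val+1) (mergeExt sb e) = Dind M d tp k (mergeExt sb e)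
      from funext fun ω => (Dind_eq_DindN M d tp k _ ω).symm] at h1
  have hW : Nice (weight M g' tp k (mergeExt sb e)) := by
    have h1 := nice_weightN hmeas g' tp (k.val+1) (mergeExt sb e)
    rwa [show weightN M g' tp (k.val+1) (mergeExt sb e) = weight M g' tp k (mergeExt sb e)
      from funext fun ω => (weight_eq_weightN M g' tp k _ ω).symm] at h1
  exact (hD.mul hW).mul ((nice_qNext hmeas hbdd d m' k _).sub
    (Nice.histFun hmeas k (m' k (mergeExt sb e))))
end Infra5
section Master
variable {τ : ℕ} {𝓐 𝓛 : Fin τ → Type} {Ω : Type} [MeasurableSpace Ω]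
variable [∀ t, DecidableEq (𝓐 t)] [∀ t, Fintype (𝓐 t)] [∀ t, Fintype (𝓛 t)]
variable {M : Model 𝓐 𝓛 Ω}

open scoped Classical in
lemma master [IsProbabilityMeasure M.μ] (hmeas : M.Meas) (k : Fin τ) {γ : Type}
    [Fintype γ] (G : γ → 𝓐 k → Hist 𝓐 𝓛 k → ℝ) (R : γ → Ω → ℝ)
    (ρ : γ → 𝓐 k → Hist 𝓐 𝓛 k → ℝ)
    (hR : ∀ c, Nice (R c))
    (hρ : ∀ c a h, ∫ ω in M.condEvent k a h, R c ω ∂M.μ =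
      ρ c a h * (M.μ (M.condEvent k a h)).toReal)
    (S : Set Ω) (hS : MeasurableSet S)
    (hSdet : ∀ h : Hist 𝓐 𝓛 k, M.histEvent k h ⊆ S ∨ Disjoint (M.histEvent k h) S) :
    ∫ ω in S, (∑ c, histFun M k (G c) ω * R c ω) ∂M.μ =
      ∑ h : Hist 𝓐 𝓛 k, (if M.histEvent k h ⊆ S then
        ∑ a, ∑ c, G c a h * ρ c a h * (M.μ (M.condEvent k a h)).toReal else 0) := by
  have hint : ∀ c : γ, Integrable (fun ω => histFun M k (G c) ω * R c ω) M.μ :=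
    fun c => ((Nice.histFun hmeas k (G c)).mul (hR c)).integrable
  rw [integral_finset_sum _ fun c _ => (hint c).integrableOn]
  have hterm : ∀ c : γ, ∀ p : 𝓐 k × Hist 𝓐 𝓛 k,
      ∫ ω in S ∩ M.condEvent k p.1 p.2, histFun M k (G c) ω * R c ω ∂M.μ =
        if M.histEvent k p.2 ⊆ S then
          G c p.1 p.2 * ρ c p.1 p.2 * (M.μ (M.condEvent k p.1 p.2)).toReal else 0 := by
    intro c p
    by_cases hsub : M.histEvent k p.2 ⊆ S
    · rw [if_pos hsub, Set.inter_eq_self_of_subset_right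
        (show M.condEvent k p.1 p.2 ⊆ S from Set.Subset.trans Set.inter_subset_right hsub),
        setIntegral_histFun_mul hmeas k _ _ p.1 p.2, hρ c p.1 p.2, mul_assoc]
    · rw [if_neg hsub]
      have hdisj : Disjoint (M.histEvent k p.2) S := (hSdet p.2).resolve_left hsub
      have : S ∩ M.condEvent k p.1 p.2 = ∅ := by
        rw [Set.inter_comm]
        exact Set.disjoint_iff_inter_eq_empty.mp
          ((hdisj.mono_left
            (show M.condEvent k p.1 p.2 ⊆ M.histEvent k p.2 from Set.inter_subset_right)))
      rw [this]
      simp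
  calc ∑ c : γ, ∫ ω in S, histFun M k (G c) ω * R c ω ∂M.μ
      = ∑ c : γ, ∑ p : 𝓐 k × Hist 𝓐 𝓛 k,
          ∫ ω in S ∩ M.condEvent k p.1 p.2, histFun M k (G c) ω * R c ω ∂M.μ := by
        exact Finset.sum_congr rfl fun c _ =>
          setIntegral_partition M hmeas k (hint c) S hS
    _ = ∑ c : γ, ∑ p : 𝓐 k × Hist 𝓐 𝓛 k,
          (if M.histEvent k p.2 ⊆ S then
            G c p.1 p.2 * ρ c p.1 p.2 * (M.μ (M.condEvent k p.1 p.2)).toReal else 0) := by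
        exact Finset.sum_congr rfl fun c _ => Finset.sum_congr rfl fun p _ => hterm c p
    _ = ∑ p : 𝓐 k × Hist 𝓐 𝓛 k, ∑ c : γ,
          (if M.histEvent k p.2 ⊆ S then
            G c p.1 p.2 * ρ c p.1 p.2 * (M.μ (M.condEvent k p.1 p.2)).toReal else 0) :=
        Finset.sum_comm
    _ = ∑ a : 𝓐 k, ∑ h : Hist 𝓐 𝓛 k, ∑ c : γ,
          (if M.histEvent k h ⊆ S then
            G c a h * ρ c a h * (M.μ (M.condEvent k a h)).toReal else 0) := by
        rw [Fintype.sum_prod_type]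
    _ = ∑ h : Hist 𝓐 𝓛 k, ∑ a : 𝓐 k, ∑ c : γ,
          (if M.histEvent k h ⊆ S then
            G c a h * ρ c a h * (M.μ (M.condEvent k a h)).toReal else 0) :=
        Finset.sum_comm
    _ = ∑ h : Hist 𝓐 𝓛 k, (if M.histEvent k h ⊆ S then
          ∑ a, ∑ c, G c a h * ρ c a h * (M.μ (M.condEvent k a h)).toReal else 0) := by
        refine Finset.sum_congr rfl fun h _ => ?_
        by_cases hsub : M.histEvent k h ⊆ S <;> simp [hsub]

end Master
section Keys
variable {τ : ℕ} {𝓐 𝓛 : Fin τ → Type} {Ω : Type} [MeasurableSpace Ω]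
variable [∀ t, DecidableEq (𝓐 t)] [∀ t, Fintype (𝓐 t)] [∀ t, Fintype (𝓛 t)]
variable {M : Model 𝓐 𝓛 Ω}

/-- The `V`-process: full-level weights `D·W` at level `k.val+1` multiplied by
`m₂ k (s̄_{k+1}, A_k, H_k)`. -/
noncomputable def VV (M : Model 𝓐 𝓛 Ω) (d : Policy 𝓐 𝓛)
    (g' : ∀ t : Fin τ, 𝓐 t → Hist 𝓐 𝓛 t → ℝ)
    (m₂ : ∀ t : Fin τ, SbarN 𝓐 (t.val + 1) → 𝓐 t → Hist 𝓐 𝓛 t → ℝ)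
    (tp : ℕ) (k : Fin τ) (sb : SbarN 𝓐 tp) (ω : Ω) : ℝ :=
  ∑ f : ExtH 𝓐 tp (k.val + 1),
    DindN M d tp (k.val + 1) (mergeH sb f) ω * weightN M g' tp (k.val + 1) (mergeH sb f) ω *
      m₂ k (mergeH sb f) (M.A k ω) (M.Hproc k ω)

lemma nice_VV (hmeas : M.Meas) (d : Policy 𝓐 𝓛)
    (g' : ∀ t : Fin τ, 𝓐 t → Hist 𝓐 𝓛 t → ℝ)
    (m₂ : ∀ t : Fin τ, SbarN 𝓐 (t.val + 1) → 𝓐 t → Hist 𝓐 𝓛 t → ℝ)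
    (tp : ℕ) (k : Fin τ) (sb : SbarN 𝓐 tp) : Nice (VV M d g' m₂ tp k sb) := by
  refine Nice.sum _ _ fun f _ => ?_
  exact ((nice_DindN hmeas d tp _ _).mul (nice_weightN hmeas g' tp _ _)).mul
    (Nice.histFun hmeas k (m₂ k (mergeH sb f)))

open scoped Classical in
lemma master_VV [IsProbabilityMeasure M.μ] (hmeas : M.Meas)
    (d : Policy 𝓐 𝓛) (g' : ∀ t : Fin τ, 𝓐 t → Hist 𝓐 𝓛 t → ℝ)
    (m₂ : ∀ t : Fin τ, SbarN 𝓐 (t.val + 1) → 𝓐 t → Hist 𝓐 𝓛 t → ℝ)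
    (tp : ℕ) (k : Fin τ) (htp : tp ≤ k.val) (sb : SbarN 𝓐 tp)
    (S : Set Ω) (hS : MeasurableSet S)
    (hSdet : ∀ h : Hist 𝓐 𝓛 k, M.histEvent k h ⊆ S ∨ Disjoint (M.histEvent k h) S) :
    ∫ ω in S, VV M d g' m₂ tp k sb ω ∂M.μ =
      ∑ h : Hist 𝓐 𝓛 k, (if M.histEvent k h ⊆ S then
        ∑ a, ∑ f : ExtH 𝓐 tp (k.val + 1),
          Gfull M d g' tp k htp sb f a h * m₂ k (mergeH sb f) a h *
            (M.μ (M.condEvent k a h)).toReal else 0) := by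
  have step1 : ∫ ω in S, VV M d g' m₂ tp k sb ω ∂M.μ =
      ∫ ω in S, (∑ f : ExtH 𝓐 tp (k.val + 1),
        histFun M k (fun a h => Gfull M d g' tp k htp sb f a h * m₂ k (mergeH sb f) a h) ω *
          (fun _ : Ω => (1 : ℝ)) ω) ∂M.μ := by
    refine setIntegral_congr_fun hS fun ω _ => ?_
    unfold VV
    refine Finset.sum_congr rfl fun f _ => ?_
    rw [DWfull_eq M d g' tp k htp sb f ω]
    simp [histFun]
  rw [step1, master hmeas k _ _ (fun f a h => (1 : ℝ))
    (fun _ => Nice.const 1)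
    (fun f a h => by rw [setIntegral_const]; rw [smul_eq_mul, mul_one, one_mul]; rfl) S hS hSdet]
  refine Finset.sum_congr rfl fun h _ => ?_
  by_cases hsub : M.histEvent k h ⊆ S
  · rw [if_pos hsub, if_pos hsub]
    refine Finset.sum_congr rfl fun a _ => Finset.sum_congr rfl fun f _ => by ring
  · rw [if_neg hsub, if_neg hsub]

open scoped Classical in
lemma master_TTk [IsProbabilityMeasure M.μ] (hmeas : M.Meas)
    (d : Policy 𝓐 𝓛) (g' : ∀ t : Fin τ, 𝓐 t → Hist 𝓐 𝓛 t → ℝ)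
    (m₂ : ∀ t : Fin τ, SbarN 𝓐 (t.val + 1) → 𝓐 t → Hist 𝓐 𝓛 t → ℝ)
    (tp : ℕ) (k : Fin τ) (sb : SbarN 𝓐 tp)
    (S : Set Ω) (hS : MeasurableSet S)
    (hSdet : ∀ h : Hist 𝓐 𝓛 k, M.histEvent k h ⊆ S ∨ Disjoint (M.histEvent k h) S) :
    ∫ ω in S, TT M d g' m₂ tp k.val sb ω ∂M.μ =
      ∑ h : Hist 𝓐 𝓛 k, (if M.histEvent k h ⊆ S then
        ∑ a, ∑ e : ExtH 𝓐 tp k.val,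
          DWpreF d g' tp k (mergeH sb e) h * qOf d m₂ k (mergeH sb e) a h *
            (M.μ (M.condEvent k a h)).toReal else 0) := by
  have step1 : ∫ ω in S, TT M d g' m₂ tp k.val sb ω ∂M.μ =
      ∫ ω in S, (∑ e : ExtH 𝓐 tp k.val,
        histFun M k (fun a h => DWpreF d g' tp k (mergeH sb e) h *
          qOf d m₂ k (mergeH sb e) a h) ω * (fun _ : Ω => (1 : ℝ)) ω) ∂M.μ := by
    refine setIntegral_congr_fun hS fun ω _ => ?_
    unfold TT
    refine Finset.sum_congr rfl fun e _ => ?_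
    rw [QT_lt M d m₂ k (mergeH sb e) ω, DW_eq_DWpreF M d g' tp k (mergeH sb e) ω]
    simp [histFun]
  rw [step1, master hmeas k _ _ (fun e a h => (1 : ℝ))
    (fun _ => Nice.const 1)
    (fun e a h => by rw [setIntegral_const]; rw [smul_eq_mul, mul_one, one_mul]; rfl) S hS hSdet]
  refine Finset.sum_congr rfl fun h _ => ?_
  by_cases hsub : M.histEvent k h ⊆ S
  · rw [if_pos hsub, if_pos hsub]
    refine Finset.sum_congr rfl fun a _ => Finset.sum_congr rfl fun e _ => by ring
  · rw [if_neg hsub, if_neg hsub]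

open scoped Classical in
lemma master_TTk1 [IsProbabilityMeasure M.μ] (hmeas : M.Meas)
    (hbdd : ∃ C, ∀ ω, |M.Y ω| ≤ C) (hpos : M.Positivity)
    {d : Policy 𝓐 𝓛} (g' : ∀ t : Fin τ, 𝓐 t → Hist 𝓐 𝓛 t → ℝ)
    {m : ∀ t : Fin τ, SbarN 𝓐 (t.val + 1) → 𝓐 t → Hist 𝓐 𝓛 t → ℝ}
    (hm : IsSeqReg M d m)
    (tp : ℕ) (k : Fin τ) (htp : tp ≤ k.val) (sb : SbarN 𝓐 tp)
    (S : Set Ω) (hS : MeasurableSet S)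
    (hSdet : ∀ h : Hist 𝓐 𝓛 k, M.histEvent k h ⊆ S ∨ Disjoint (M.histEvent k h) S) :
    ∫ ω in S, TT M d g' m tp (k.val + 1) sb ω ∂M.μ =
      ∑ h : Hist 𝓐 𝓛 k, (if M.histEvent k h ⊆ S then
        ∑ a, ∑ f : ExtH 𝓐 tp (k.val + 1),
          Gfull M d g' tp k htp sb f a h * m k (mergeH sb f) a h *
            (M.μ (M.condEvent k a h)).toReal else 0) := by
  have step1 : ∫ ω in S, TT M d g' m tp (k.val + 1) sb ω ∂M.μ =
      ∫ ω in S, (∑ f : ExtH 𝓐 tp (k.val + 1),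
        histFun M k (Gfull M d g' tp k htp sb f) ω *
          (fun ω => M.qNext (qOf d m) k (mergeH sb f) ω) ω) ∂M.μ := by
    refine setIntegral_congr_fun hS fun ω _ => ?_
    unfold TT
    refine Finset.sum_congr rfl fun f _ => ?_
    rw [← DWfull_eq M d g' tp k htp sb f ω]
    exact congrArg _ (qNext_eq_QT M d m k (mergeH sb f) ω).symm
  rw [step1, master hmeas k _ _ (fun f a h => m k (mergeH sb f) a h)
    (fun f => nice_qNext hmeas hbdd d m k (mergeH sb f))
    (fun f a h => setIntegral_qNext hpos hm k (mergeH sb f) a h) S hS hSdet]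

/-- KEY2: tower property step with the true sequential regressions. -/
lemma key2 [IsProbabilityMeasure M.μ] (hmeas : M.Meas)
    (hbdd : ∃ C, ∀ ω, |M.Y ω| ≤ C) (hpos : M.Positivity)
    {d : Policy 𝓐 𝓛} (g' : ∀ t : Fin τ, 𝓐 t → Hist 𝓐 𝓛 t → ℝ)
    {m : ∀ t : Fin τ, SbarN 𝓐 (t.val + 1) → 𝓐 t → Hist 𝓐 𝓛 t → ℝ}
    (hm : IsSeqReg M d m)
    (tp : ℕ) (k : Fin τ) (htp : tp ≤ k.val) (sb : SbarN 𝓐 tp)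
    (S : Set Ω) (hS : MeasurableSet S)
    (hSdet : ∀ h : Hist 𝓐 𝓛 k, M.histEvent k h ⊆ S ∨ Disjoint (M.histEvent k h) S) :
    ∫ ω in S, VV M d g' m tp k sb ω ∂M.μ =
      ∫ ω in S, TT M d g' m tp (k.val + 1) sb ω ∂M.μ := by
  rw [master_VV hmeas d g' m tp k htp sb S hS hSdet,
    master_TTk1 hmeas hbdd hpos g' hm tp k htp sb S hS hSdet]

end Keys
section Key1
variable {τ : ℕ} {𝓐 𝓛 : Fin τ → Type} {Ω : Type} [MeasurableSpace Ω]
variable [∀ t, DecidableEq (𝓐 t)] [∀ t, Fintype (𝓐 t)] [∀ t, Fintype (𝓛 t)]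
variable {M : Model 𝓐 𝓛 Ω}

open scoped Classical in
lemma key1 [IsProbabilityMeasure M.μ] [∀ t, Nonempty (𝓐 t)] (hmeas : M.Meas)
    (hpos : M.Positivity) (d : Policy 𝓐 𝓛)
    (g' : ∀ t : Fin τ, 𝓐 t → Hist 𝓐 𝓛 t → ℝ) {k : Fin τ} (hgK : g' k = M.g k)
    (m₂ : ∀ t : Fin τ, SbarN 𝓐 (t.val + 1) → 𝓐 t → Hist 𝓐 𝓛 t → ℝ)
    (tp : ℕ) (htp : tp ≤ k.val) (sb : SbarN 𝓐 tp)
    (S : Set Ω) (hS : MeasurableSet S)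
    (hSdet : ∀ h : Hist 𝓐 𝓛 k, M.histEvent k h ⊆ S ∨ Disjoint (M.histEvent k h) S) :
    ∫ ω in S, TT M d g' m₂ tp k.val sb ω ∂M.μ =
      ∫ ω in S, VV M d g' m₂ tp k sb ω ∂M.μ := by
  rw [master_TTk hmeas d g' m₂ tp k sb S hS hSdet,
    master_VV hmeas d g' m₂ tp k htp sb S hS hSdet]
  refine Finset.sum_congr rfl fun h _ => ?_
  by_cases hsub : M.histEvent k h ⊆ S
  swap
  · rw [if_neg hsub, if_neg hsub]
  rw [if_pos hsub, if_pos hsub]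
  have hμE : ∀ a : 𝓐 k, (M.μ (M.condEvent k a h)).toReal = M.g k a h *
      (M.μ (M.histEvent k h)).toReal := fun a => (g_mul_hist hmeas hpos k a h).symm
  set μF := (M.μ (M.histEvent k h)).toReal with hμF
  calc
    ∑ a, ∑ e : ExtH 𝓐 tp k.val,
        DWpreF d g' tp k (mergeH sb e) h * qOf d m₂ k (mergeH sb e) a h *
          (M.μ (M.condEvent k a h)).toReal
      = ∑ e : ExtH 𝓐 tp k.val, ∑ x : 𝓐 k,
          DWpreF d g' tp k (mergeH sb e) h *
            m₂ k (snoc (mergeH sb e) x) (d k (snoc (mergeH sb e) x) h) h *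
            (M.g k x h * μF) := by
        rw [Finset.sum_comm]
        refine Finset.sum_congr rfl fun e _ => Finset.sum_congr rfl fun x _ => ?_
        rw [hμE x]
        rfl
    _ = ∑ a, ∑ f : ExtH 𝓐 tp (k.val + 1),
          Gfull M d g' tp k htp sb f a h * m₂ k (mergeH sb f) a h *
            (M.μ (M.condEvent k a h)).toReal := by
        refine Eq.symm ?_
        rw [Finset.sum_comm]
        rw [← Equiv.sum_comp (extSnocEquiv htp).symm
          (fun f => ∑ a, Gfull M d g' tp k htp sb f a h * m₂ k (mergeH sb f) a h *
            (M.μ (M.condEvent k a h)).toReal)]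
        rw [Fintype.sum_prod_type]
        refine Finset.sum_congr rfl fun e _ => Finset.sum_congr rfl fun b _ => ?_
        have happ : (extSnocEquiv htp) ((extSnocEquiv htp).symm (e, b)) = (e, b) :=
          Equiv.apply_symm_apply _ _
        have hms : mergeH sb ((extSnocEquiv htp).symm (e, b)) = snoc (mergeH sb e) b :=
          mergeH_snoc htp sb e b
        unfold Gfull
        rw [happ, hms]
        set c := d k (snoc (mergeH sb e) b) h with hc
        rw [Finset.sum_eq_single c]
        · rw [if_pos rfl, hμE c, hgK]
          have hgc : M.g k c h ≠ 0 := ne_of_gt (g_pos hmeas hpos k c h)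
          field_simp
        · intro a _ hne
          rw [if_neg hne]
          ring
        · intro hmem
          exact absurd (Finset.mem_univ c) hmem

end Key1
section Claim
variable {τ : ℕ} {𝓐 𝓛 : Fin τ → Type} {Ω : Type} [MeasurableSpace Ω]
variable [∀ t, DecidableEq (𝓐 t)] [∀ t, Fintype (𝓐 t)] [∀ t, Fintype (𝓛 t)]
variable {M : Model 𝓐 𝓛 Ω}

lemma TT_self (M : Model 𝓐 𝓛 Ω) (d : Policy 𝓐 𝓛)
    (g' : ∀ t : Fin τ, 𝓐 t → Hist 𝓐 𝓛 t → ℝ)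
    (m₂ : ∀ t : Fin τ, SbarN 𝓐 (t.val + 1) → 𝓐 t → Hist 𝓐 𝓛 t → ℝ)
    (tp : ℕ) (sb : SbarN 𝓐 tp) (ω : Ω) :
    TT M d g' m₂ tp tp sb ω = QT M d m₂ tp sb ω := by
  unfold TT
  rw [Fintype.sum_unique, mergeH_zero]
  have h1 : DindN M d tp tp sb ω = 1 :=
    Finset.prod_eq_one fun u _ => dif_neg (fun hc => absurd (lt_of_le_of_lt hc.1 hc.2) (lt_irrefl _))
  have h2 : weightN M g' tp tp sb ω = 1 :=
    Finset.prod_eq_one fun u _ => dif_neg (fun hc => absurd (lt_of_le_of_lt hc.1 hc.2) (lt_irrefl _))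
  rw [h1, h2, one_mul, one_mul]

lemma Cterm_eq_sub (M : Model 𝓐 𝓛 Ω) (d : Policy 𝓐 𝓛)
    (g' : ∀ t : Fin τ, 𝓐 t → Hist 𝓐 𝓛 t → ℝ)
    (m' : ∀ t : Fin τ, SbarN 𝓐 (t.val + 1) → 𝓐 t → Hist 𝓐 𝓛 t → ℝ)
    (tp : ℕ) (sb : SbarN 𝓐 tp) (k : Fin τ) (ω : Ω) :
    Cterm M d g' m' tp sb k ω =
      TT M d g' m' tp (k.val + 1) sb ω - VV M d g' m' tp k sb ω := by
  unfold Cterm TT VV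
  rw [← Finset.sum_sub_distrib]
  refine Fintype.sum_equiv extEquiv _ _ fun e => ?_
  rw [mergeExt_eq, Dind_eq_DindN, weight_eq_weightN, qNext_eq_QT]
  ring

lemma claim_ind [IsProbabilityMeasure M.μ] [∀ t, Nonempty (𝓐 t)]
    (hmeas : M.Meas) (hbdd : ∃ C, ∀ ω, |M.Y ω| ≤ C) (hpos : M.Positivity)
    {d : Policy 𝓐 𝓛}
    {m : ∀ t : Fin τ, SbarN 𝓐 (t.val + 1) → 𝓐 t → Hist 𝓐 𝓛 t → ℝ}
    (hm : IsSeqReg M d m)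
    (g' : ∀ t : Fin τ, 𝓐 t → Hist 𝓐 𝓛 t → ℝ)
    (m' : ∀ t : Fin τ, SbarN 𝓐 (t.val + 1) → 𝓐 t → Hist 𝓐 𝓛 t → ℝ)
    (tp : ℕ) (sb : SbarN 𝓐 tp) (S : Set Ω) (hS : MeasurableSet S)
    (hSdet : ∀ k : Fin τ, tp ≤ k.val → ∀ h : Hist 𝓐 𝓛 k,
      M.histEvent k h ⊆ S ∨ Disjoint (M.histEvent k h) S)
    (hrob : ∀ k : Fin τ, tp ≤ k.val → (m' k = m k ∨ g' k = M.g k)) :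
    ∀ (n K : ℕ), τ - K = n → tp ≤ K → K ≤ τ →
      ∫ ω in S, ((∑ k : Fin τ, if K ≤ k.val then Cterm M d g' m' tp sb k ω else 0) +
        TT M d g' m' tp K sb ω) ∂M.μ = ∫ ω in S, TT M d g' m tp K sb ω ∂M.μ := by
  intro n
  induction n with
  | zero =>
    intro K hn htpK hKτ
    have hKt : τ ≤ K := by omega
    refine setIntegral_congr_fun hS fun ω _ => ?_
    have hz : (∑ k : Fin τ, if K ≤ k.val then Cterm M d g' m' tp sb k ω else 0) = 0 :=
      Finset.sum_eq_zero fun k _ => if_neg (by have := k.isLt; omega)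
    rw [hz, zero_add]
    refine Finset.sum_congr rfl fun e _ => ?_
    have hQT : QT M d m' K (mergeH sb e) ω = QT M d m K (mergeH sb e) ω := by
      unfold QT
      rw [dif_neg (by omega), dif_neg (by omega)]
    rw [hQT]
  | succ n ih =>
    intro K hn htpK hKτ'
    have hKτ : K < τ := by omega
    set kf : Fin τ := ⟨K, hKτ⟩ with hkf
    have hkv : kf.val = K := rfl
    have htpk : tp ≤ kf.val := htpK
    -- pointwise rearrangement
    have hpt : ∀ ω, ((∑ k : Fin τ, if K ≤ k.val then Cterm M d g' m' tp sb k ω else 0) +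
        TT M d g' m' tp K sb ω) =
        ((∑ k : Fin τ, if K + 1 ≤ k.val then Cterm M d g' m' tp sb k ω else 0) +
          TT M d g' m' tp (K + 1) sb ω) +
          (TT M d g' m' tp K sb ω - VV M d g' m' tp kf sb ω) := by
      intro ω
      have hsplit : (∑ k : Fin τ, if K ≤ k.val then Cterm M d g' m' tp sb k ω else 0) =
          (∑ k : Fin τ, if K + 1 ≤ k.val then Cterm M d g' m' tp sb k ω else 0) +
            Cterm M d g' m' tp sb kf ω := by
        rw [Finset.sum_eq_sum_sdiff_singleton_add (Finset.mem_univ kf)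
            (fun k => if K ≤ k.val then Cterm M d g' m' tp sb k ω else 0),
          Finset.sum_eq_sum_sdiff_singleton_add (Finset.mem_univ kf)
            (fun k => if K + 1 ≤ k.val then Cterm M d g' m' tp sb k ω else 0)]
        rw [if_pos (le_refl K), if_neg (by omega : ¬ K + 1 ≤ kf.val), add_zero]
        congr 1
        refine Finset.sum_congr rfl fun k hk => ?_
        have hne : k ≠ kf := (Finset.mem_sdiff.mp hk).2 ∘ Finset.mem_singleton.mpr
        by_cases hk1 : K + 1 ≤ k.val
        · rw [if_pos (by omega), if_pos hk1]
        · have : ¬ K ≤ k.val := by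
            intro hc
            exact hne (Fin.ext (by omega : k.val = kf.val))
          rw [if_neg this, if_neg hk1]
      rw [hsplit, Cterm_eq_sub M d g' m' tp sb kf ω]
      show _ + (TT M d g' m' tp (kf.val + 1) sb ω - _) + _ = _
      ring
    have nsum : Nice (fun ω => ∑ k : Fin τ,
        if K + 1 ≤ k.val then Cterm M d g' m' tp sb k ω else 0) := by
      refine Nice.sum _ _ fun k _ => ?_
      by_cases hk : K + 1 ≤ k.val
      · simp only [if_pos hk]
        exact nice_Cterm hmeas hbdd d g' m' tp sb k
      · simp only [if_neg hk]
        exact Nice.const 0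
    have nTT1 : Nice (TT M d g' m' tp (K + 1) sb) := nice_TT hmeas hbdd d g' m' tp (K + 1) sb
    have nTTK : Nice (TT M d g' m' tp K sb) := nice_TT hmeas hbdd d g' m' tp K sb
    have nVV : Nice (VV M d g' m' tp kf sb) := nice_VV hmeas d g' m' tp kf sb
    calc ∫ ω in S, ((∑ k : Fin τ, if K ≤ k.val then Cterm M d g' m' tp sb k ω else 0) +
          TT M d g' m' tp K sb ω) ∂M.μ
        = ∫ ω in S, (((∑ k : Fin τ, if K + 1 ≤ k.val then Cterm M d g' m' tp sb k ω else 0) +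
            TT M d g' m' tp (K + 1) sb ω) +
            (TT M d g' m' tp K sb ω - VV M d g' m' tp kf sb ω)) ∂M.μ :=
          setIntegral_congr_fun hS fun ω _ => hpt ω
      _ = (∫ ω in S, ((∑ k : Fin τ, if K + 1 ≤ k.val then Cterm M d g' m' tp sb k ω else 0) +
            TT M d g' m' tp (K + 1) sb ω) ∂M.μ) +
            ((∫ ω in S, TT M d g' m' tp K sb ω ∂M.μ) -
              ∫ ω in S, VV M d g' m' tp kf sb ω ∂M.μ) := by
          rw [integral_add ((nsum.add nTT1).integrable.integrableOn)
            ((nTTK.sub nVV).integrable.integrableOn),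
            integral_sub (nTTK.integrable.integrableOn) (nVV.integrable.integrableOn)]
      _ = (∫ ω in S, TT M d g' m tp (K + 1) sb ω ∂M.μ) +
            ((∫ ω in S, TT M d g' m' tp K sb ω ∂M.μ) -
              ∫ ω in S, VV M d g' m' tp kf sb ω ∂M.μ) := by
          rw [ih (K + 1) (by omega) (by omega) (by omega)]
      _ = ∫ ω in S, TT M d g' m tp K sb ω ∂M.μ := by
          rcases hrob kf htpk with hmk | hgk
          · -- m' kf = m kf
            have hTT : ∀ ω, TT M d g' m' tp K sb ω = TT M d g' m tp K sb ω := by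
              intro ω
              refine Finset.sum_congr rfl fun e _ => ?_
              have : QT M d m' K (mergeH sb e) ω = QT M d m K (mergeH sb e) ω := by
                unfold QT
                rw [dif_pos hKτ, dif_pos hKτ]
                unfold qOf
                rw [show m' ⟨K, hKτ⟩ = m ⟨K, hKτ⟩ from hmk]
              rw [this]
            have hVV : ∀ ω, VV M d g' m' tp kf sb ω = VV M d g' m tp kf sb ω := by
              intro ω
              refine Finset.sum_congr rfl fun f _ => ?_
              rw [show m' kf = m kf from hmk]
            rw [setIntegral_congr_fun hS (fun ω _ => hTT ω),
              setIntegral_congr_fun hS (fun ω _ => hVV ω),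
              key2 hmeas hbdd hpos g' hm tp kf htpk sb S hS (hSdet kf htpk)]
            ring
          · -- g' kf = M.g kf
            rw [key1 hmeas hpos d g' hgk m' tp htpk sb S hS (hSdet kf htpk)]
            rw [key1 hmeas hpos d g' hgk m tp htpk sb S hS (hSdet kf htpk),
              key2 hmeas hbdd hpos g' hm tp kf htpk sb S hS (hSdet kf htpk)]
            ring

end Claim
/-- **Multiply robust unbiased transformation** (Proposition 2 of the paper).
Fix a paper-time `t ∈ {0, 1, …, τ-1}` and suppose that for every `k ∈ {t+1, …, τ}` either
`m'_k = m_k` or `g'_k = g_k`.  Then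
`E[φ_{t+1}(s̄_t, Z; η') ∣ A_t = a_t, H_t = h_t] = m_t(s̄_t, a_t, h_t)`,
with the conditioning omitted at `t = 0`, where `m_0 = θ = E[q_1(A_1, H_1)]`.
Internally times are 0-based: the paper's time `t ≥ 1` is the index `j` with paper
`t = j.val + 1`, and the paper's `k` is the index `k` with paper `k = k.val + 1`. -/
theorem multiply_robust_unbiased_transformation
    [∀ t, Nonempty (𝓐 t)] [∀ t, Fintype (𝓛 t)] [∀ t, Nonempty (𝓛 t)]
    (hτ : 0 < τ)
    (M : Model 𝓐 𝓛 Ω) [IsProbabilityMeasure M.μ]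
    (hmeas : M.Meas) (hbdd : ∃ C, ∀ ω, |M.Y ω| ≤ C)
    (hpos : M.Positivity)
    (d : Policy 𝓐 𝓛)
    -- the true sequential regression functions
    (m : ∀ t : Fin τ, SbarN 𝓐 (t.val + 1) → 𝓐 t → Hist 𝓐 𝓛 t → ℝ)
    (hm : IsSeqReg M d m)
    -- nuisance values η' = (g'_t, m'_t)
    (g' : ∀ t : Fin τ, 𝓐 t → Hist 𝓐 𝓛 t → ℝ)
    (hg' : ∀ (t : Fin τ) (a : 𝓐 t) (h : Hist 𝓐 𝓛 t), 0 < g' t a h)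
    (m' : ∀ t : Fin τ, SbarN 𝓐 (t.val + 1) → 𝓐 t → Hist 𝓐 𝓛 t → ℝ) :
    -- paper time t = j.val + 1 ∈ {1, …, τ-1}: conditional version
    (∀ (j : Fin τ), j.val + 1 < τ →
      (∀ k : Fin τ, j.val + 1 ≤ k.val → (m' k = m k ∨ g' k = M.g k)) →
      ∀ (sb : SbarN 𝓐 (j.val + 1)) (a : 𝓐 j) (h : Hist 𝓐 𝓛 j),
        condExpOn M.μ (M.condEvent j a h) (phi M d g' m' (j.val + 1) sb) = m j sb a h) ∧
    -- paper time t = 0: unconditional version, with m_0 = θ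
    ((∀ k : Fin τ, m' k = m k ∨ g' k = M.g k) →
      (∫ ω, phi M d g' m' 0 (emptySbar 𝓐) ω ∂M.μ) = theta hτ M d m) := by
  letI : ∀ t, DecidableEq (𝓛 t) := fun t => Classical.decEq _
  constructor
  · -- conditional version
    intro j hjτ hrob sb a h
    have hS : MeasurableSet (M.condEvent j a h) := measurableSet_condEvent hmeas j a h
    have hSdet : ∀ k : Fin τ, j.val + 1 ≤ k.val → ∀ hh : Hist 𝓐 𝓛 k,
        M.histEvent k hh ⊆ M.condEvent j a h ∨
          Disjoint (M.histEvent k hh) (M.condEvent j a h) := by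
      intro k hk hh
      have hjk : j.val < k.val := by omega
      by_cases hcase : hh.2 ⟨j, hjk⟩ = a ∧ histRestrict j (le_of_lt hjk) hh = h
      · left
        intro ω hω
        have hω' : M.Hproc k ω = hh := hω
        constructor
        · show M.A j ω = a
          rw [A_restrict M j hjk ω, hω']
          exact hcase.1
        · show M.Hproc j ω = h
          rw [Hproc_restrict M j (le_of_lt hjk) ω, hω']
          exact hcase.2
      · right
        refine Set.disjoint_left.mpr fun ω h1 h2 => hcase ⟨?_, ?_⟩
        · have h1' : M.Hproc k ω = hh := h1
          rw [← h1']
          exact h2.1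
        · have h1' : M.Hproc k ω = hh := h1
          rw [← h1']
          exact h2.2
    have hclaim := claim_ind hmeas hbdd hpos hm g' m' (j.val + 1) sb
      (M.condEvent j a h) hS hSdet (fun k hk => hrob k hk)
      (τ - (j.val + 1)) (j.val + 1) rfl (le_refl _) (by omega)
    have hphi : ∫ ω in M.condEvent j a h, phi M d g' m' (j.val + 1) sb ω ∂M.μ =
        ∫ ω in M.condEvent j a h, TT M d g' m (j.val + 1) (j.val + 1) sb ω ∂M.μ := by
      rw [← hclaim]
      exact setIntegral_congr_fun hS fun ω _ => phi_eq M d g' m' (j.val + 1) (by omega) sb ω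
    have hTT : ∀ ω, TT M d g' m (j.val + 1) (j.val + 1) sb ω =
        M.qNext (qOf d m) j sb ω := by
      intro ω
      rw [TT_self]
      rfl
    show condExpOn M.μ (M.condEvent j a h) (phi M d g' m' (j.val + 1) sb) = m j sb a h
    unfold condExpOn
    rw [hphi, setIntegral_congr_fun hS (fun ω _ => hTT ω)]
    exact (hm j sb a h).symm
  · -- unconditional version
    intro hrob
    have hclaim := claim_ind hmeas hbdd hpos hm g' m' 0 (emptySbar 𝓐)
      Set.univ MeasurableSet.univ (fun k _ hh => Or.inl (Set.subset_univ _))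
      (fun k _ => hrob k) τ 0 rfl (le_refl 0) (Nat.zero_le τ)
    calc ∫ ω, phi M d g' m' 0 (emptySbar 𝓐) ω ∂M.μ
        = ∫ ω in Set.univ, phi M d g' m' 0 (emptySbar 𝓐) ω ∂M.μ := by
          rw [setIntegral_univ]
      _ = ∫ ω in Set.univ, TT M d g' m 0 0 (emptySbar 𝓐) ω ∂M.μ := by
          rw [← hclaim]
          exact setIntegral_congr_fun MeasurableSet.univ fun ω _ =>
            phi_eq M d g' m' 0 hτ (emptySbar 𝓐) ω
      _ = theta hτ M d m := by
          rw [setIntegral_univ]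
          unfold theta
          refine integral_congr_ae (Filter.Eventually.of_forall fun ω => ?_)
          rw [TT_self]
          unfold QT
          rw [dif_pos hτ]

end GLMTP
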